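/- (Descent Lemma, coordinate-wise.) Let λ ≥ 0, let A be a real m×n matrix and b̃ ∈ ℝᵐ, and define Ψ̃(y) = ½‖S_λ(Aᵀy)‖² − ⟨y, b̃⟩. Then for every y ∈ ℝᵐ, every index i ∈ {1,…,m}, and every t ∈ ℝ: Ψ̃(y + t·eᵢ) ≤ Ψ̃(y) + (⟨aᵢ, S_λ(Aᵀy)⟩ − b̃ᵢ)·t + (‖aᵢ‖²/2)·t², where aᵢ ∈ ℝⁿ is the i-th row of A and eᵢ is the i-th standard basis vector of ℝᵐ. -/

import Mathlib

open scoped RealInnerProductSpace BigOperators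
open Matrix

noncomputable def softShrink {n : ℕ} (lam : ℝ) (x : EuclideanSpace ℝ (Fin n)) :
    EuclideanSpace ℝ (Fin n) :=
  WithLp.toLp 2 (fun i => Real.sign (x i) * max (|x i| - lam) 0)

noncomputable def mulVecE {m n : ℕ} (A : Matrix (Fin m) (Fin n) ℝ)
    (x : EuclideanSpace ℝ (Fin n)) : EuclideanSpace ℝ (Fin m) :=
  Matrix.toEuclideanLin A x

/-- The `i`-th row of `A`, viewed as a vector of `ℝⁿ`. -/
noncomputable def rowE {m n : ℕ} (A : Matrix (Fin m) (Fin n) ℝ) (i : Fin m) :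
    EuclideanSpace ℝ (Fin n) :=
  WithLp.toLp 2 (fun j => A i j)

lemma sform (lam : ℝ) (hlam : 0 ≤ lam) (u : ℝ) :
    Real.sign u * max (|u| - lam) 0 = max (u - lam) 0 + min (u + lam) 0 := by
  rcases lt_trichotomy u 0 with h | h | h
  · rw [Real.sign_of_neg h, abs_of_neg h, max_eq_right (by linarith : u - lam ≤ 0)]
    rcases le_total (u + lam) 0 with h2 | h2
    · rw [min_eq_left h2, max_eq_left (by linarith : (0:ℝ) ≤ -u - lam)]; ring
    · rw [min_eq_right h2, max_eq_right (by linarith : -u - lam ≤ 0)]; ring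
  · simp [h]; rw [max_eq_right (by linarith : -lam ≤ 0), min_eq_right hlam]; ring
  · rw [Real.sign_of_pos h, abs_of_pos h, min_eq_right (by linarith : (0:ℝ) ≤ u + lam)]
    ring

lemma key (lam : ℝ) (hlam : 0 ≤ lam) (u d : ℝ) :
    (Real.sign (u + d) * max (|u + d| - lam) 0) ^ 2 ≤
      (Real.sign u * max (|u| - lam) 0 + d) ^ 2 := by
  rw [sform lam hlam, sform lam hlam]
  rcases le_total (u - lam) 0 with h1 | h1 <;>
  rcases le_total (u + lam) 0 with h2 | h2 <;>
  rcases le_total (u + d - lam) 0 with h3 | h3 <;>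
  rcases le_total (u + d + lam) 0 with h4 | h4 <;>
  simp only [max_eq_left, max_eq_right, min_eq_left, min_eq_right, h1, h2, h3, h4] <;>
  nlinarith [sq_nonneg d, sq_nonneg (u + d), sq_nonneg lam, sq_nonneg (u + d - lam),
    sq_nonneg (u + d + lam)]

/-- Coordinate-wise descent lemma for `Ψ̃(y) = ½‖S_λ(Aᵀy)‖² − ⟨y, b̃⟩`:
`Ψ̃(y + t eᵢ) ≤ Ψ̃(y) + (⟨aᵢ, S_λ(Aᵀy)⟩ − b̃ᵢ) t + (‖aᵢ‖²/2) t²`. -/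
theorem descent_lemma_coordinatewise {m n : ℕ} (lam : ℝ) (hlam : 0 ≤ lam)
    (A : Matrix (Fin m) (Fin n) ℝ) (btil : EuclideanSpace ℝ (Fin m)) :
    ∀ (y : EuclideanSpace ℝ (Fin m)) (i : Fin m) (t : ℝ),
      (1 / 2) * ‖softShrink lam (mulVecE Aᵀ (y + t • EuclideanSpace.single i (1 : ℝ)))‖ ^ 2 -
          ⟪y + t • EuclideanSpace.single i (1 : ℝ), btil⟫ ≤
        ((1 / 2) * ‖softShrink lam (mulVecE Aᵀ y)‖ ^ 2 - ⟪y, btil⟫) +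
          (⟪rowE A i, softShrink lam (mulVecE Aᵀ y)⟫ - btil i) * t +
          (‖rowE A i‖ ^ 2 / 2) * t ^ 2 := by
  intro y i t
  have hnorm : ∀ {k : ℕ} (x : EuclideanSpace ℝ (Fin k)), ‖x‖ ^ 2 = ∑ j, (x j) ^ 2 := by
    intro k x
    rw [EuclideanSpace.norm_eq, Real.sq_sqrt (by positivity)]; simp [sq_abs]
  have hip : ∀ {k : ℕ} (x z : EuclideanSpace ℝ (Fin k)), ⟪x, z⟫ = ∑ j, x j * z j := by
    intro k x z; simp [PiLp.inner_apply, RCLike.inner_apply, mul_comm]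
  have hv : ∀ j, mulVecE Aᵀ (y + t • EuclideanSpace.single i (1 : ℝ)) j
      = mulVecE Aᵀ y j + t * A i j := by
    intro j
    simp [mulVecE, Matrix.toEuclideanLin, Matrix.mulVec, dotProduct,
      EuclideanSpace.single_apply, Pi.single_apply, mul_add, mul_ite, ite_mul, Finset.sum_ite_eq, Finset.sum_ite_eq', Finset.sum_add_distrib,
      Finset.mul_sum, mul_comm]
  have hinner : ⟪y + t • EuclideanSpace.single i (1 : ℝ), btil⟫ = ⟪y, btil⟫ + t * btil i := by
    simp [inner_add_left, real_inner_smul_left, EuclideanSpace.inner_single_left]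
  have hS : ∀ j, (softShrink lam (mulVecE Aᵀ (y + t • EuclideanSpace.single i (1 : ℝ))) j) ^ 2
      ≤ (softShrink lam (mulVecE Aᵀ y) j + t * A i j) ^ 2 := by
    intro j
    have := key lam hlam (mulVecE Aᵀ y j) (t * A i j)
    simpa [softShrink, hv j] using this
  have h2 : ‖softShrink lam (mulVecE Aᵀ (y + t • EuclideanSpace.single i (1 : ℝ)))‖ ^ 2
      ≤ ‖softShrink lam (mulVecE Aᵀ y)‖ ^ 2
        + 2 * t * ⟪rowE A i, softShrink lam (mulVecE Aᵀ y)⟫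
        + t ^ 2 * ‖rowE A i‖ ^ 2 := by
    rw [hnorm, hnorm, hnorm, hip]
    calc ∑ j, (softShrink lam (mulVecE Aᵀ (y + t • EuclideanSpace.single i (1 : ℝ))) j) ^ 2
        ≤ ∑ j, (softShrink lam (mulVecE Aᵀ y) j + t * A i j) ^ 2 :=
          Finset.sum_le_sum fun j _ => hS j
      _ = ∑ j, (softShrink lam (mulVecE Aᵀ y) j) ^ 2
            + 2 * t * ∑ j, rowE A i j * softShrink lam (mulVecE Aᵀ y) j
            + t ^ 2 * ∑ j, (rowE A i j) ^ 2 := by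
          rw [Finset.mul_sum, Finset.mul_sum, ← Finset.sum_add_distrib,
            ← Finset.sum_add_distrib]
          refine Finset.sum_congr rfl fun j _ => ?_
          simp only [rowE, WithLp.ofLp_toLp]; ring
  rw [hinner]
  nlinarith [h2]
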